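/- Suppose ρ realizes (V_i) and V_0 > 1. If ρ_0 ≥ 5, or if the sum of those coordinates ρ_i that are even is at least 6, then μ ≤ 2. -/

import Mathlib

/-- The standard inner product on `ℤ^{t+1}`. -/
def dotP {t : ℕ} (x y : Fin (t + 1) → ℤ) : ℤ := ∑ i, x i * y i

/-- A vector of `ℤ^{t+1}` is characteristic if all of its coordinates are odd. -/
def CharVec {t : ℕ} (c : Fin (t + 1) → ℤ) : Prop := ∀ i, Odd (c i)

/-- `ρ ∈ ℤ^{t+1}` realizes the sequence `(V_i)` if, with `n = ‖ρ‖²`, for every integer `k`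
with `2|k| ≤ n` the set `{‖c‖² : c characteristic, c·ρ ≡ n + 2k (mod 2n)}` has least
element `8V_{|k|} + t + 1`. -/
def Realizes {t : ℕ} (V : ℕ → ℕ) (ρ : Fin (t + 1) → ℤ) : Prop :=
  ∀ k : ℤ, 2 * |k| ≤ dotP ρ ρ →
    IsLeast {N : ℤ | ∃ c : Fin (t + 1) → ℤ, CharVec c ∧
        dotP c ρ ≡ dotP ρ ρ + 2 * k [ZMOD 2 * dotP ρ ρ] ∧ N = dotP c c}
      (8 * (V k.natAbs : ℤ) + t + 1)

/-- `T_m = #{i : 0 ≤ i < g̃ and 0 < V_i ≤ m}` (note `T_0 = 0`). -/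
def Tq (V : ℕ → ℕ) (g m : ℕ) : ℕ :=
  ((Finset.range g).filter (fun i => 0 < V i ∧ V i ≤ m)).card

/-- When `V_0 > 1`, `μ = min{T_i − T_{i−1} : 1 ≤ i ≤ V_0 − 1}`. -/
noncomputable def muQ (V : ℕ → ℕ) (g : ℕ) : ℕ :=
  sInf {d : ℕ | ∃ i : ℕ, 1 ≤ i ∧ i ≤ V 0 - 1 ∧ d = Tq V g i - Tq V g (i - 1)}

/-!
Writing a characteristic vector as `c = 2x + 1`, the realization condition says that `2 V_{|k|}`
is the least value of the cost `Σ xᵢ (xᵢ + 1)` on the class `x·ρ ≡ γ + k (mod n)`, where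
`n = Σ ρᵢ + 2γ`. Coordinatewise `x (x + 1) = x ρ - x (ρ - 1 - x) ≥ x ρ - ⌊(ρ - 1)² / 4⌋`, so the
cost is `x·ρ` minus a constant plus a non-negative deficit vanishing at `x = ⌊(ρ - 1) / 2⌋`; the
involution `x ↦ -1 - x` preserves the cost and reflects the classes about `γ`. When `ρ₀ ≥ 5` or
the even coordinates sum to at least `6`, this yields a point `y` of deficit `δ ≤ 1` at distance
`A ≥ 3 + δ` below `γ`, and the two lower bounds together with parity show that the class of
`y·ρ + 3` costs at least `4` more than `y`: `V_{A-3} ≥ V_A + 2`. As `V` is non-increasing, the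
value `V_{A-3} - 1` is then taken only at `A - 2` and `A - 1`, so the corresponding difference
`T_m - T_{m-1}` is at most `2`.
-/

open Finset

/-- The maximum of `x * (r - 1 - x)` over the integers `x`. -/
def maxProd (r : ℤ) : ℤ := (r - 1) ^ 2 / 4

def deficit (r x : ℤ) : ℤ := maxProd r - x * (r - 1 - x)

def evenPart (r : ℤ) : ℤ := if Even r then r else 0

lemma deficit_two_mul (r x : ℤ) : deficit (2 * r) x = (x - r) * (x - r + 1) := by
  have : maxProd (2 * r) = r ^ 2 - r := by
    rw [maxProd, show (2 * r - 1) ^ 2 = 1 + (r ^ 2 - r) * 4 by ring,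
      Int.add_mul_ediv_right _ _ (by norm_num)]
    norm_num
  rw [deficit, this]
  ring

lemma deficit_two_mul_add_one (r x : ℤ) : deficit (2 * r + 1) x = (x - r) ^ 2 := by
  have : maxProd (2 * r + 1) = r ^ 2 := by
    rw [maxProd, show (2 * r + 1 - 1) ^ 2 = r ^ 2 * 4 by ring, Int.mul_ediv_cancel _ (by norm_num)]
  rw [deficit, this]
  ring

lemma evenPart_two_mul (r : ℤ) : evenPart (2 * r) = 2 * r :=
  if_pos (even_two_mul r)

lemma evenPart_two_mul_add_one (r : ℤ) : evenPart (2 * r + 1) = 0 :=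
  if_neg (Int.not_even_two_mul_add_one r)

lemma deficit_nonneg (r x : ℤ) : 0 ≤ deficit r x := by
  obtain ⟨r, rfl | rfl⟩ := Int.even_or_odd' r
  · rw [deficit_two_mul]
    rcases le_or_gt 0 (x - r) with h | h
    · exact mul_nonneg h (by omega)
    · exact mul_nonneg_of_nonpos_of_nonpos h.le (by omega)
  · rw [deficit_two_mul_add_one]
    positivity

lemma deficit_half (r : ℤ) : deficit r ((r - 1) / 2) = 0 := by
  obtain ⟨r, rfl | rfl⟩ := Int.even_or_odd' r
  · rw [show (2 * r - 1) / 2 = r - 1 by omega, deficit_two_mul]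
    ring
  · rw [show (2 * r + 1 - 1) / 2 = r by omega, deficit_two_mul_add_one]
    ring

lemma deficit_half_sub_one {r : ℤ} (hr : Odd r) : deficit r ((r - 1) / 2 - 1) = 1 := by
  obtain ⟨r, rfl⟩ := hr
  rw [show (2 * r + 1 - 1) / 2 = r by omega, deficit_two_mul_add_one]
  ring

lemma mul_sub_one_eq (r : ℤ) : r * (r - 1) = 2 * ((r - 1) / 2 * r) + evenPart r := by
  obtain ⟨r, rfl | rfl⟩ := Int.even_or_odd' r
  · rw [show (2 * r - 1) / 2 = r - 1 by omega, evenPart_two_mul]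
    ring
  · rw [show (2 * r + 1 - 1) / 2 = r by omega, evenPart_two_mul_add_one]
    ring

lemma mul_sub_one_le_of_deficit_eq_zero {r x : ℤ} (hr : 0 ≤ r) (h : deficit r x = 0) :
    r * (r - 1) ≤ 2 * (x * r) + evenPart r := by
  obtain ⟨r, rfl | rfl⟩ := Int.even_or_odd' r
  · rw [deficit_two_mul, mul_eq_zero] at h
    rw [evenPart_two_mul]
    obtain rfl | rfl : x = r ∨ x = r - 1 := by omega
    · nlinarith
    · nlinarith
  · rw [deficit_two_mul_add_one, pow_eq_zero_iff two_ne_zero, sub_eq_zero] at h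
    rw [h, evenPart_two_mul_add_one]
    exact le_of_eq (by ring)

lemma evenPart_nonneg {r : ℤ} (hr : 0 ≤ r) : 0 ≤ evenPart r := by
  unfold evenPart
  split <;> omega

lemma evenPart_le_mul_self (r : ℤ) : evenPart r ≤ r * r := by
  unfold evenPart
  split <;> rcases le_or_gt r 0 with h | h <;> nlinarith

section Vectors

variable {t : ℕ} (ρ : Fin (t + 1) → ℤ)

def cost (x : Fin (t + 1) → ℤ) : ℤ := ∑ i, x i * (x i + 1)

/-- `γ = Σ ρᵢ (ρᵢ - 1) / 2`, the centre about which `x ↦ -1 - x` reflects the classes of `x·ρ`. -/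
def halfExcess : ℤ := ∑ i, ρ i * (ρ i - 1) / 2

def basePoint : Fin (t + 1) → ℤ := fun i => (ρ i - 1) / 2

def totalDeficit (x : Fin (t + 1) → ℤ) : ℤ := ∑ i, deficit (ρ i) (x i)

lemma two_mul_halfExcess : 2 * halfExcess ρ = ∑ i, ρ i * (ρ i - 1) := by
  rw [halfExcess, mul_sum]
  exact sum_congr rfl fun i _ => Int.mul_ediv_cancel' (Int.even_mul_pred_self _).two_dvd

lemma dotP_self_eq : dotP ρ ρ = ∑ i, ρ i + 2 * halfExcess ρ := by
  rw [two_mul_halfExcess, dotP, ← sum_add_distrib]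
  exact sum_congr rfl fun i _ => by ring

lemma dotP_two_mul_add_one (x : Fin (t + 1) → ℤ) :
    dotP (fun i => 2 * x i + 1) ρ = ∑ i, ρ i + 2 * dotP x ρ := by
  rw [dotP, dotP, mul_sum, ← sum_add_distrib]
  exact sum_congr rfl fun i _ => by ring

lemma dotP_two_mul_add_one_self (x : Fin (t + 1) → ℤ) :
    dotP (fun i => 2 * x i + 1) (fun i => 2 * x i + 1) = 4 * cost x + (t + 1) := by
  have hsq : ∀ i, (2 * x i + 1) * (2 * x i + 1) = 4 * (x i * (x i + 1)) + 1 := fun i => by ring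
  simp only [dotP, cost, hsq, sum_add_distrib, mul_sum, sum_const, card_univ, Fintype.card_fin]
  ring

lemma dotP_two_mul_add_one_modEq_iff (x : Fin (t + 1) → ℤ) (k : ℤ) :
    dotP (fun i => 2 * x i + 1) ρ ≡ dotP ρ ρ + 2 * k [ZMOD 2 * dotP ρ ρ] ↔
      dotP x ρ ≡ halfExcess ρ + k [ZMOD dotP ρ ρ] := by
  rw [show dotP ρ ρ + 2 * k = ∑ i, ρ i + 2 * (halfExcess ρ + k) by rw [dotP_self_eq]; ring,
    dotP_two_mul_add_one, ← Int.ModEq.mul_left_cancel_iff' (a := dotP x ρ) (c := 2) two_ne_zero]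
  exact ⟨Int.ModEq.add_left_cancel' _, Int.ModEq.add_left _⟩

lemma even_cost (x : Fin (t + 1) → ℤ) : Even (cost x) :=
  even_iff_two_dvd.2 (dvd_sum fun i _ => (Int.even_mul_succ_self (x i)).two_dvd)

lemma cost_eq (x : Fin (t + 1) → ℤ) :
    cost x = dotP x ρ - ∑ i, maxProd (ρ i) + totalDeficit ρ x := by
  rw [cost, dotP, totalDeficit, ← sum_sub_distrib, ← sum_add_distrib]
  exact sum_congr rfl fun i _ => by rw [deficit]; ring

lemma totalDeficit_nonneg (x : Fin (t + 1) → ℤ) : 0 ≤ totalDeficit ρ x :=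
  sum_nonneg fun _ _ => deficit_nonneg _ _

lemma dotP_sub_le_cost (x : Fin (t + 1) → ℤ) : dotP x ρ - ∑ i, maxProd (ρ i) ≤ cost x := by
  linarith [cost_eq ρ x, totalDeficit_nonneg ρ x]

lemma cost_neg_sub_one (x : Fin (t + 1) → ℤ) : cost (fun i => -1 - x i) = cost x :=
  sum_congr rfl fun i _ => by ring

lemma dotP_neg_sub_one (x : Fin (t + 1) → ℤ) :
    dotP (fun i => -1 - x i) ρ = -∑ i, ρ i - dotP x ρ := by
  rw [dotP, dotP, ← sum_neg_distrib, ← sum_sub_distrib]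
  exact sum_congr rfl fun i _ => by ring

lemma neg_sum_sub_dotP_sub_le_cost (x : Fin (t + 1) → ℤ) :
    -∑ i, ρ i - dotP x ρ - ∑ i, maxProd (ρ i) ≤ cost x := by
  simpa only [cost_neg_sub_one, dotP_neg_sub_one] using dotP_sub_le_cost ρ (fun i => -1 - x i)

/-- A point `y` at distance `A = γ - y·ρ` below the centre which, by `cost_add_four_le`, is
cheaper by `4` than every point of the class of `y·ρ + 3`. -/
structure GapWitness (y : Fin (t + 1) → ℤ) : Prop where
  gap : 3 + totalDeficit ρ y ≤ halfExcess ρ - dotP y ρ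
  two_mul_gap_le : 2 * (halfExcess ρ - dotP y ρ) ≤ dotP ρ ρ
  totalDeficit_le : ∀ x, dotP x ρ = dotP y ρ + 3 → totalDeficit ρ y ≤ totalDeficit ρ x

variable {ρ} in
lemma cost_add_four_le {x y : Fin (t + 1) → ℤ} (hy : GapWitness ρ y)
    (hx : dotP x ρ ≡ dotP y ρ + 3 [ZMOD dotP ρ ρ]) : cost y + 4 ≤ cost x := by
  obtain ⟨q, hq⟩ := Int.modEq_iff_add_fac.1 hx.symm
  have hcy := cost_eq ρ y
  have hcx := cost_eq ρ x
  have hreflect := neg_sum_sub_dotP_sub_le_cost ρ x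
  have hn := dotP_self_eq ρ
  have hδ := totalDeficit_nonneg ρ y
  have hδx := totalDeficit_nonneg ρ x
  have hgap := hy.gap
  have hgap_le := hy.two_mul_gap_le
  obtain ⟨a, ha⟩ := even_cost x
  obtain ⟨b, hb⟩ := even_cost y
  -- With `x·ρ = y·ρ + 3 + n q`: for `q > 0` the direct bound, for `q < 0` the reflected one, for
  -- `q = 0` the comparison of deficits gives `cost x ≥ cost y + 3`, and parity gives `+ 4`.
  suffices cost y + 3 ≤ cost x by omega
  rcases lt_trichotomy q 0 with hq0 | rfl | hq0
  · have : dotP ρ ρ * q ≤ -dotP ρ ρ := by nlinarith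
    linarith
  · rw [mul_zero, add_zero] at hq
    linarith [hy.totalDeficit_le x hq]
  · have : dotP ρ ρ ≤ dotP ρ ρ * q := by nlinarith
    linarith

lemma totalDeficit_basePoint : totalDeficit ρ (basePoint ρ) = 0 :=
  sum_eq_zero fun i _ => deficit_half (ρ i)

lemma two_mul_halfExcess_sub_dotP_basePoint :
    2 * (halfExcess ρ - dotP (basePoint ρ) ρ) = ∑ i, evenPart (ρ i) := by
  rw [mul_sub, two_mul_halfExcess, dotP, mul_sum, ← sum_sub_distrib]
  exact sum_congr rfl fun i _ => by rw [mul_sub_one_eq (ρ i), basePoint]; ring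

variable {ρ} in
lemma two_mul_halfExcess_le_of_totalDeficit_eq_zero (hρ : ∀ i, 0 ≤ ρ i)
    {x : Fin (t + 1) → ℤ} (hx : totalDeficit ρ x = 0) :
    2 * halfExcess ρ ≤ 2 * dotP x ρ + ∑ i, evenPart (ρ i) := by
  have hzero := (sum_eq_zero_iff_of_nonneg fun i _ => deficit_nonneg (ρ i) (x i)).1 hx
  rw [two_mul_halfExcess, dotP, mul_sum, ← sum_add_distrib]
  exact sum_le_sum fun i hi => mul_sub_one_le_of_deficit_eq_zero (hρ i) (hzero i hi)

lemma sum_evenPart_le_dotP_self : ∑ i, evenPart (ρ i) ≤ dotP ρ ρ :=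
  sum_le_sum fun i _ => evenPart_le_mul_self (ρ i)

lemma gapWitness_basePoint (h : 6 ≤ ∑ i, evenPart (ρ i)) : GapWitness ρ (basePoint ρ) where
  gap := by
    have := two_mul_halfExcess_sub_dotP_basePoint ρ
    rw [totalDeficit_basePoint]
    omega
  two_mul_gap_le := by
    rw [two_mul_halfExcess_sub_dotP_basePoint]
    exact sum_evenPart_le_dotP_self ρ
  totalDeficit_le x _ := by
    rw [totalDeficit_basePoint]
    exact totalDeficit_nonneg ρ x

variable {ρ} in
lemma gapWitness_basePoint_sub_single (hρ : ∀ i, 0 ≤ ρ i) (hodd : Odd (ρ 0)) (h5 : 5 ≤ ρ 0) :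
    GapWitness ρ (basePoint ρ - Pi.single 0 1) := by
  have hdot : dotP (basePoint ρ - Pi.single 0 1) ρ = dotP (basePoint ρ) ρ - ρ 0 := by
    simp only [dotP, Pi.sub_apply, Fin.sum_univ_succ, Pi.single_eq_same, ne_eq,
      Fin.succ_ne_zero, not_false_eq_true, Pi.single_eq_of_ne, sub_zero]
    ring
  have hdef : totalDeficit ρ (basePoint ρ - Pi.single 0 1) = 1 := by
    simp only [totalDeficit, Pi.sub_apply, Fin.sum_univ_succ, Pi.single_eq_same, ne_eq,
      Fin.succ_ne_zero, not_false_eq_true, Pi.single_eq_of_ne, sub_zero]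
    rw [show deficit (ρ 0) (basePoint ρ 0 - 1) = 1 from deficit_half_sub_one hodd, add_eq_left]
    exact sum_eq_zero fun i _ => deficit_half _
  have hbase := two_mul_halfExcess_sub_dotP_basePoint ρ
  have hES : 0 ≤ ∑ i, evenPart (ρ i) := sum_nonneg fun i _ => evenPart_nonneg (hρ i)
  refine ⟨by omega, ?_, fun x hx => ?_⟩
  · have hrest : ∑ i : Fin t, evenPart (ρ i.succ) ≤ ∑ i : Fin t, ρ i.succ * ρ i.succ :=
      sum_le_sum fun i _ => evenPart_le_mul_self _
    have h0 : evenPart (ρ 0) = 0 := if_neg (Int.not_even_iff_odd.2 hodd)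
    have hn : dotP ρ ρ = ρ 0 * ρ 0 + ∑ i : Fin t, ρ i.succ * ρ i.succ := Fin.sum_univ_succ _
    rw [Fin.sum_univ_succ, h0] at hbase
    rw [hdot]
    nlinarith
  · rw [hdef]
    by_contra! hlt
    have := two_mul_halfExcess_le_of_totalDeficit_eq_zero hρ
      (le_antisymm (by omega) (totalDeficit_nonneg ρ x))
    omega

variable {ρ} in
lemma exists_gapWitness (hρ : ∀ i, 0 ≤ ρ i)
    (hcase : 5 ≤ ρ 0 ∨ 6 ≤ ∑ i ∈ univ.filter (fun i : Fin (t + 1) => Even (ρ i)), ρ i) :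
    ∃ y, GapWitness ρ y := by
  have hES : ∑ i ∈ univ.filter (fun i : Fin (t + 1) => Even (ρ i)), ρ i = ∑ i, evenPart (ρ i) :=
    sum_filter _ _
  rw [hES] at hcase
  by_cases h6 : 6 ≤ ∑ i, evenPart (ρ i)
  · exact ⟨_, gapWitness_basePoint ρ h6⟩
  obtain h5 : 5 ≤ ρ 0 := hcase.resolve_right h6
  rcases Int.even_or_odd (ρ 0) with heven | hodd
  · refine absurd ?_ h6
    obtain ⟨r, hr⟩ := heven
    calc (6 : ℤ) ≤ evenPart (ρ 0) := by rw [hr, ← two_mul, evenPart_two_mul]; omega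
      _ ≤ ∑ i, evenPart (ρ i) :=
        single_le_sum (fun i _ => evenPart_nonneg (hρ i)) (mem_univ 0)
  · exact ⟨_, gapWitness_basePoint_sub_single hρ hodd h5⟩

end Vectors

namespace Realizes

variable {t : ℕ} {V : ℕ → ℕ} {ρ : Fin (t + 1) → ℤ}

lemma two_mul_le_cost (hreal : Realizes V ρ) {k : ℤ} (hk : 2 * |k| ≤ dotP ρ ρ)
    {x : Fin (t + 1) → ℤ} (hx : dotP x ρ ≡ halfExcess ρ + k [ZMOD dotP ρ ρ]) :
    2 * (V k.natAbs : ℤ) ≤ cost x := by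
  have := (hreal k hk).2
    ⟨_, fun i => ⟨x i, rfl⟩, (dotP_two_mul_add_one_modEq_iff ρ x k).2 hx, rfl⟩
  rw [dotP_two_mul_add_one_self] at this
  linarith

lemma exists_cost_eq (hreal : Realizes V ρ) {k : ℤ} (hk : 2 * |k| ≤ dotP ρ ρ) :
    ∃ x, dotP x ρ ≡ halfExcess ρ + k [ZMOD dotP ρ ρ] ∧ cost x = 2 * (V k.natAbs : ℤ) := by
  obtain ⟨c, hc, hmod, hN⟩ := (hreal k hk).1
  choose x hx using hc
  obtain rfl : c = fun i => 2 * x i + 1 := funext hx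
  refine ⟨x, (dotP_two_mul_add_one_modEq_iff ρ x k).1 hmod, ?_⟩
  rw [dotP_two_mul_add_one_self] at hN
  linarith

lemma exists_add_two_le (hreal : Realizes V ρ) {y : Fin (t + 1) → ℤ} (hy : GapWitness ρ y) :
    ∃ K, V (K + 3) + 2 ≤ V K := by
  have hgap := hy.gap
  have hgap_le := hy.two_mul_gap_le
  have hδ := totalDeficit_nonneg ρ y
  refine ⟨(halfExcess ρ - dotP y ρ - 3).toNat, ?_⟩
  have hupper := hreal.two_mul_le_cost (k := dotP y ρ - halfExcess ρ)
    (by rw [abs_of_nonpos (by omega)]; omega) (x := y) (by rw [add_sub_cancel])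
  obtain ⟨x, hx, hcost⟩ := hreal.exists_cost_eq (k := dotP y ρ + 3 - halfExcess ρ)
    (by rw [abs_of_nonpos (by omega)]; omega)
  rw [add_sub_cancel] at hx
  have hlower := cost_add_four_le hy hx
  have h1 : (dotP y ρ - halfExcess ρ).natAbs = (halfExcess ρ - dotP y ρ - 3).toNat + 3 := by omega
  have h2 : (dotP y ρ + 3 - halfExcess ρ).natAbs = (halfExcess ρ - dotP y ρ - 3).toNat := by omega
  rw [h1] at hupper
  rw [h2] at hcost
  omega

end Realizes

lemma Tq_sub_Tq_sub_one_le (V : ℕ → ℕ) (g m : ℕ) :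
    Tq V g m - Tq V g (m - 1) ≤ #{i ∈ range g | V i = m} := by
  have hsub : {i ∈ range g | 0 < V i ∧ V i ≤ m} ⊆
      {i ∈ range g | 0 < V i ∧ V i ≤ m - 1} ∪ {i ∈ range g | V i = m} := by
    intro i
    simp only [mem_filter, mem_union, mem_range]
    omega
  have := (card_le_card hsub).trans (card_union_le _ _)
  unfold Tq
  omega

lemma card_eq_sub_one_le_two {V : ℕ → ℕ} (hV : Antitone V) {K : ℕ} (hK : V (K + 3) + 2 ≤ V K)
    (g : ℕ) : #{i ∈ range g | V i = V K - 1} ≤ 2 := by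
  have hsub : {i ∈ range g | V i = V K - 1} ⊆ {K + 1, K + 2} := by
    intro i hi
    have hVi := (mem_filter.1 hi).2
    have hKi : K < i := by
      by_contra! h
      have := hV h
      omega
    have hi3 : i < K + 3 := by
      by_contra! h
      have := hV h
      omega
    simp only [mem_insert, mem_singleton]
    omega
  exact (card_le_card hsub).trans (card_insert_le _ _)

lemma muQ_le_two_of_add_two_le {V : ℕ → ℕ} (hV : Antitone V) {K : ℕ}
    (hK : V (K + 3) + 2 ≤ V K) (g : ℕ) : muQ V g ≤ 2 := by
  have hK0 := hV (Nat.zero_le K)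
  unfold muQ
  refine le_trans (Nat.sInf_le ⟨V K - 1, by omega, by omega, rfl⟩) ?_
  exact (Tq_sub_Tq_sub_one_le V g _).trans (card_eq_sub_one_le_two hV hK g)

theorem stmt4_general (t : ℕ) (V : ℕ → ℕ) (g : ℕ)
    (hV1 : ∀ i, V (i + 1) ≤ V i)
    (ρ : Fin (t + 1) → ℤ)
    (hpos : ∀ i, 1 ≤ ρ i)
    (hreal : Realizes V ρ)
    (hcase : 5 ≤ ρ 0 ∨ 6 ≤ ∑ i ∈ Finset.univ.filter (fun i : Fin (t + 1) => Even (ρ i)), ρ i) :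
    muQ V g ≤ 2 := by
  obtain ⟨y, hy⟩ := exists_gapWitness (fun i => zero_le_one.trans (hpos i)) hcase
  obtain ⟨K, hK⟩ := hreal.exists_add_two_le hy
  exact muQ_le_two_of_add_two_le (antitone_nat_of_succ_le hV1) hK g

/-- Suppose `ρ` realizes `(V_i)` and `V_0 > 1`. If `ρ_0 ≥ 5`, or if the sum of the even
coordinates of `ρ` is at least `6`, then `μ ≤ 2`. -/
theorem stmt4 (t : ℕ) (V : ℕ → ℕ) (g : ℕ)
    (hV1 : ∀ i, V (i + 1) ≤ V i)
    (hV2 : ∀ i, V i = 0 ↔ g ≤ i)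
    (hV3 : ∀ i, V i ≤ V (i + 1) + 1)
    (ρ : Fin (t + 1) → ℤ)
    (hmono : ∀ i j : Fin (t + 1), i ≤ j → ρ j ≤ ρ i)
    (hpos : ∀ i, 1 ≤ ρ i)
    (hg : 2 * (g : ℤ) ≤ dotP ρ ρ)
    (hreal : Realizes V ρ)
    (hV0 : 1 < V 0)
    (hcase : 5 ≤ ρ 0 ∨ 6 ≤ ∑ i ∈ Finset.univ.filter (fun i : Fin (t + 1) => Even (ρ i)), ρ i) :
    muQ V g ≤ 2 :=
  stmt4_general t V g hV1 ρ hpos hreal hcase
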